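/- Let H = ℓ²(ℤ) ⊗ ℂ^{2d} with cells H_x = span{|x↑r⟩, |x↓r⟩ : r = 1,…,d}, let S_↑ and S_↓ be the partial shifts (S_↑|x↑r⟩ = |x+1↑r⟩, S_↑|x↓r⟩ = |x↓r⟩, S_↓|x↑r⟩ = |x↑r⟩, S_↓|x↓r⟩ = |x−1↓r⟩), and let C = ⊕_{x∈ℤ} C_x be any unitary coin operator acting cell-wise. Then for every x ∈ ℤ, the Schur function f of the cell H_x with respect to the walk W = S_↓ C S_↑ is an even function: f(−z) = f(z) for all z in the open unit disk; equivalently, all odd-order coefficients P_x (W* P_x⊥)ⁿ W* P_x (n odd) in its power expansion vanish. -/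

import Mathlib

open Complex Filter Set Metric Matrix

variable {H : Type*} [NormedAddCommGroup H] [InnerProductSpace ℂ H] [CompleteSpace H] {d : ℕ}

/-- The cell `H_x = span {|x↑r⟩, |x↓r⟩ : r}` of the lattice Hilbert space
`ℓ²(ℤ) ⊗ ℂ^{2d}` with orthonormal basis `e`, where `true = ↑` and `false = ↓`. -/
def cell (e : ℤ × Bool × Fin d → H) (x : ℤ) : Submodule ℂ H :=
  Submodule.span ℂ (e '' {p : ℤ × Bool × Fin d | p.1 = x})

/-- The shifted cell `H̃_x = span {|x-1,↓,r⟩, |x,↑,r⟩ : r}`. -/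
def tcell (e : ℤ × Bool × Fin d → H) (x : ℤ) : Submodule ℂ H :=
  Submodule.span ℂ (e '' {p : ℤ × Bool × Fin d |
    (p.1 = x - 1 ∧ p.2.1 = false) ∨ (p.1 = x ∧ p.2.1 = true)})

/-- The Schur function of the range of the orthogonal projection `P` with respect to `W`,
realized as the compression `P (W - z (1-P))⁻¹ P` on `H`. -/
noncomputable def schurP (W P : H →L[ℂ] H) (z : ℂ) : H →L[ℂ] H :=
  P ∘L Ring.inverse (W - z • (1 - P)) ∘L P

/-!
Write `W = S_↓ C S_↑`, `P` for the projection onto `H_x` and `Q = 1 - P`. Since `C` preserves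
cells, `W` maps `e p` into the shifted cell `H̃_y` with `y = p.1 + [p = ↑]`, while `e p` itself
lies in `H̃_{p.1 + [p = ↓]}`: each step changes the shifted-cell index by `±1` and never jumps
over `H_x`. Hence the sites outside `H_x` split into two classes, the "odd" ones being reached
from `H_x` after an odd number of steps that avoid `H_x`, such that `QW` exchanges the span of
the odd sites with the span of the other ones (which contains `H_x`) and `PW` kills the odd
span. So `P W (QW)ⁿ P = 0` for odd `n`; its adjoint `P (W*Q)ⁿ W* P` is the `n`-th coefficient
of the Neumann series `f(z) = P (1 - z W*Q)⁻¹ W* P`, which is therefore even.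
-/

section General

variable {𝕜 E ι : Type*} [RCLike 𝕜] [NormedAddCommGroup E] [InnerProductSpace 𝕜 E]

theorem Orthonormal.isOrtho_span_image {e : ι → E} (he : Orthonormal 𝕜 e) {s t : Set ι}
    (hst : Disjoint s t) : Submodule.span 𝕜 (e '' s) ⟂ Submodule.span 𝕜 (e '' t) := by
  rw [Submodule.isOrtho_span]
  rintro _ ⟨i, hi, rfl⟩ _ ⟨j, hj, rfl⟩
  exact he.inner_eq_zero (hst.ne_of_mem hi hj)

theorem eq_starProjection_of_forall_mem {K : Submodule 𝕜 E} [K.HasOrthogonalProjection]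
    {P : E →L[𝕜] E} (hP : ∀ v, P v ∈ K ∧ v - P v ∈ Kᗮ) : P = K.starProjection :=
  ContinuousLinearMap.ext fun v => (K.eq_starProjection_of_mem_orthogonal (hP v).1 (hP v).2).symm

theorem apply_mem_of_mem_span_image {e : ι → E} {A : E →L[𝕜] E} {F : Submodule 𝕜 E}
    {s : Set ι} (h : ∀ i ∈ s, A (e i) ∈ F) {v : E} (hv : v ∈ Submodule.span 𝕜 (e '' s)) :
    A v ∈ F :=
  Submodule.span_le (p := F.comap (A : E →ₗ[𝕜] E)).2 (Set.image_subset_iff.2 h) hv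

theorem Orthonormal.mem_unitary_of_apply_eq [CompleteSpace E] {e : ι → E}
    (he : Orthonormal 𝕜 e) (hspan : (Submodule.span 𝕜 (Set.range e)).topologicalClosure = ⊤)
    (σ : ι ≃ ι) {S : E →L[𝕜] E} (hS : ∀ i, S (e i) = e (σ i)) :
    S ∈ unitary (E →L[𝕜] E) := by
  let b := HilbertBasis.mk he hspan.ge
  have hstar : ∀ i, star S (e i) = e (σ.symm i) := by
    intro i
    refine b.repr.injective (lp.ext (funext fun j => ?_))
    simp only [b.repr_apply_apply, b, HilbertBasis.coe_mk, ContinuousLinearMap.star_eq_adjoint,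
      ContinuousLinearMap.adjoint_inner_right, hS]
    classical
    simp only [orthonormal_iff_ite.mp he, ← Equiv.eq_symm_apply]
  have hdense := Submodule.dense_iff_topologicalClosure_eq_top.mpr hspan
  rw [Unitary.mem_iff]
  constructor <;> refine ContinuousLinearMap.ext_on hdense ?_ <;> rintro _ ⟨i, rfl⟩ <;>
    simp [hS, hstar]

theorem comp_pow_comp_eq_zero_of_odd {R M : Type*} [Semiring R] [TopologicalSpace M]
    [AddCommMonoid M] [Module R M] {L T S : M →L[R] M} {E₀ E₁ : Set M} (hS : ∀ v, S v ∈ E₀)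
    (hT₀ : Set.MapsTo T E₀ E₁) (hT₁ : Set.MapsTo T E₁ E₀) (hL : ∀ v ∈ E₁, L v = 0)
    {n : ℕ} (hn : Odd n) : L ∘L (T ^ n) ∘L S = 0 := by
  obtain ⟨k, rfl⟩ := hn
  have hmaps : Set.MapsTo (T ^ (2 * k + 1) : M →L[R] M) E₀ E₁ := by
    rw [FunLike.coe_pow_eq_iterate, Function.iterate_succ, Function.iterate_mul]
    exact ((hT₀.comp hT₁).iterate k).comp hT₀
  ext v
  exact hL _ (hmaps (hS v))

theorem IsSelfAdjoint.star_compression_pow {A : Type*} [Ring A] [StarRing A] {P W : A}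
    (hP : IsSelfAdjoint P) (n : ℕ) : star (P * (W * (((1 - P) * W) ^ n * P))) =
      P * ((star W * (1 - P)) ^ n * (star W * P)) := by
  simp [star_pow, hP.star_eq, mul_assoc]

end General

section Schur

theorem hasSum_schurP {W P : H →L[ℂ] H} (hW : W ∈ unitary (H →L[ℂ] H)) (hP : ‖1 - P‖ ≤ 1)
    {z : ℂ} (hz : ‖z‖ < 1) :
    HasSum (fun n : ℕ => z ^ n • (P ∘L ((star W ∘L (1 - P)) ^ n) ∘L star W ∘L P))
      (schurP W P z) := by
  set D := star W * (1 - P)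
  have hD : ‖z • D‖ < 1 := by
    rw [norm_smul, CStarRing.norm_mem_unitary_mul _ (Unitary.star_mem hW)]
    nlinarith [norm_nonneg z]
  have hWinv : Ring.inverse W = star W := Ring.inverse_unit (Unitary.toUnits ⟨W, hW⟩)
  have hinv : Ring.inverse (W - z • (1 - P)) = Ring.inverse (1 - z • D) * star W := by
    rw [show W - z • (1 - P) = W * (1 - z • D) by
      rw [mul_sub, mul_one, mul_smul_comm, ← mul_assoc, Unitary.mul_star_self_of_mem hW, one_mul],
      Ring.inverse_mul (Or.inl (Unitary.isUnit_coe (U := ⟨W, hW⟩))), hWinv]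
  have hterm : ∀ n : ℕ, z ^ n • (P ∘L ((star W ∘L (1 - P)) ^ n) ∘L star W ∘L P)
      = P * ((z • D) ^ n * star W * P) := fun n => by
    change z ^ n • (P * (D ^ n * (star W * P))) = _
    rw [smul_pow, smul_mul_assoc, smul_mul_assoc, mul_smul_comm, mul_assoc]
  have hschur : schurP W P z = P * (Ring.inverse (1 - z • D) * star W * P) := by
    change P * (Ring.inverse (W - z • (1 - P)) * P) = _
    rw [hinv]
  simpa only [hterm, hschur] using
    (((hasSum_geom_series_inverse _ hD).mul_right (star W)).mul_right P).mul_left P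

theorem schurP_neg {W P : H →L[ℂ] H} (hW : W ∈ unitary (H →L[ℂ] H)) (hP : ‖1 - P‖ ≤ 1)
    (hodd : ∀ n : ℕ, Odd n → P ∘L ((star W ∘L (1 - P)) ^ n) ∘L star W ∘L P = 0)
    {z : ℂ} (hz : ‖z‖ < 1) : schurP W P (-z) = schurP W P z := by
  refine (hasSum_schurP hW hP (by rwa [norm_neg])).unique ?_
  convert hasSum_schurP hW hP hz using 2 with n
  rcases Nat.even_or_odd n with hn | hn
  · rw [hn.neg_pow]
  · rw [hodd n hn, smul_zero, smul_zero]

end Schur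

def shiftEquiv {ι : Type*} (a : Bool → ℤ) : ℤ × Bool × ι ≃ ℤ × Bool × ι where
  toFun p := (p.1 + a p.2.1, p.2)
  invFun p := (p.1 - a p.2.1, p.2)
  left_inv p := by simp
  right_inv p := by simp

/-- `p.1 + cond p.2.1 0 1` is the index of the shifted cell `H̃_y` containing `e p`. -/
def oddSites (x : ℤ) : Set (ℤ × Bool × Fin d) :=
  {p | p.1 < x ∧ Even (p.1 + cond p.2.1 0 1 - x) ∨ x < p.1 ∧ Odd (p.1 + cond p.2.1 0 1 - x)}

theorem ne_and_notMem_oddSites_of_step {x : ℤ} {p q : ℤ × Bool × Fin d}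
    (hq : q.1 = p.1 + cond p.2.1 1 0 - 1 ∧ q.2.1 = false ∨
      q.1 = p.1 + cond p.2.1 1 0 ∧ q.2.1 = true)
    (hp : p ∈ oddSites x) : q.1 ≠ x ∧ q ∉ oddSites x := by
  obtain ⟨y, c, r⟩ := p
  obtain ⟨y', c', r'⟩ := q
  cases c <;> cases c' <;> simp [oddSites, Int.even_iff, Int.odd_iff] at * <;> omega

theorem mem_oddSites_of_step {x : ℤ} {p q : ℤ × Bool × Fin d}
    (hq : q.1 = p.1 + cond p.2.1 1 0 - 1 ∧ q.2.1 = false ∨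
      q.1 = p.1 + cond p.2.1 1 0 ∧ q.2.1 = true)
    (hp : p ∉ oddSites x) (hqx : q.1 ≠ x) : q ∈ oddSites x := by
  obtain ⟨y, c, r⟩ := p
  obtain ⟨y', c', r'⟩ := q
  cases c <;> cases c' <;> simp [oddSites, Int.even_iff, Int.odd_iff] at * <;> omega

section Lattice

variable {E : Type*} [NormedAddCommGroup E] [InnerProductSpace ℂ E] (e : ℤ × Bool × Fin d → E)

theorem walk_apply_mem_tcell {Sup Sdn C : E →L[ℂ] E}
    (hSup_up : ∀ x r, Sup (e (x, true, r)) = e (x + 1, true, r))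
    (hSup_dn : ∀ x r, Sup (e (x, false, r)) = e (x, false, r))
    (hSdn_up : ∀ x r, Sdn (e (x, true, r)) = e (x, true, r))
    (hSdn_dn : ∀ x r, Sdn (e (x, false, r)) = e (x - 1, false, r))
    (hCcell : ∀ x : ℤ, ∀ v ∈ cell e x, C v ∈ cell e x) (p : ℤ × Bool × Fin d) :
    (Sdn ∘L C ∘L Sup) (e p) ∈ tcell e (p.1 + cond p.2.1 1 0) := by
  have hSdn : ∀ y, ∀ v ∈ cell e y, Sdn v ∈ tcell e y := by
    intro y v hv
    refine apply_mem_of_mem_span_image (e := e) (A := Sdn) (s := {q | q.1 = y})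
      (fun q hq => ?_) hv
    have hq : q.1 = y := hq
    obtain ⟨y, _ | _, r⟩ := q
    · rw [hSdn_dn]
      exact Submodule.subset_span ⟨_, Or.inl ⟨by simpa using hq, rfl⟩, rfl⟩
    · rw [hSdn_up]
      exact Submodule.subset_span ⟨_, Or.inr ⟨hq, rfl⟩, rfl⟩
  obtain ⟨y, c, r⟩ := p
  refine hSdn _ _ (hCcell _ _ (Submodule.subset_span ⟨(y + cond c 1 0, c, r), rfl, ?_⟩))
  cases c <;> simp [hSup_up, hSup_dn]

theorem cell_compression_pow_odd_eq_zero (he : Orthonormal ℂ e) {W : E →L[ℂ] E}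
    (hW : ∀ p, W (e p) ∈ tcell e (p.1 + cond p.2.1 1 0)) (x : ℤ)
    [(cell e x).HasOrthogonalProjection] {n : ℕ} (hn : Odd n) :
    (cell e x).starProjection ∘L W ∘L (((1 - (cell e x).starProjection) ∘L W) ^ n) ∘L
      (cell e x).starProjection = 0 := by
  set P := (cell e x).starProjection
  have hP_out : ∀ q : ℤ × Bool × Fin d, q.1 ≠ x → P (e q) = 0 := fun q hq =>
    (Submodule.starProjection_apply_eq_zero_iff _).2
      ((he.isOrtho_span_image (Set.disjoint_singleton_left.2 hq)).le
        (Submodule.subset_span ⟨q, rfl, rfl⟩))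
  have hQ_out : ∀ q : ℤ × Bool × Fin d, q.1 ≠ x → (1 - P) (e q) = e q := fun q hq => by
    simp [hP_out q hq]
  have hQ_in : ∀ q : ℤ × Bool × Fin d, q.1 = x → (1 - P) (e q) = 0 := fun q hq => by
    have hq : e q ∈ cell e x := Submodule.subset_span ⟨q, hq, rfl⟩
    simp [P, Submodule.starProjection_eq_self_iff.2 hq]
  refine comp_pow_comp_eq_zero_of_odd (L := P ∘L W) (T := (1 - P) ∘L W) (S := P)
    (E₀ := (Submodule.span ℂ (e '' (oddSites x)ᶜ) : Set E))
    (E₁ := (Submodule.span ℂ (e '' oddSites x) : Set E))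
    (fun v => ?_) (fun v hv => ?_) (fun v hv => ?_) (fun v hv => ?_) hn
  · have hcell : cell e x ≤ Submodule.span ℂ (e '' (oddSites x)ᶜ) := by
      refine Submodule.span_mono (Set.image_mono fun p hp => ?_)
      have hp : p.1 = x := hp
      simp [oddSites, hp]
    exact hcell (Submodule.starProjection_apply_mem _ v)
  · refine apply_mem_of_mem_span_image (fun p hp => ?_) hv
    refine apply_mem_of_mem_span_image (A := 1 - P) (fun q hq => ?_) (hW p)
    by_cases hqx : q.1 = x
    · rw [hQ_in q hqx]
      exact zero_mem _
    · rw [hQ_out q hqx]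
      exact Submodule.subset_span ⟨q, mem_oddSites_of_step hq hp hqx, rfl⟩
  · refine apply_mem_of_mem_span_image (fun p hp => ?_) hv
    refine apply_mem_of_mem_span_image (A := 1 - P) (fun q hq => ?_) (hW p)
    obtain ⟨hqx, hq⟩ := ne_and_notMem_oddSites_of_step hq hp
    rw [hQ_out q hqx]
    exact Submodule.subset_span ⟨q, hq, rfl⟩
  · refine (Submodule.mem_bot ℂ).1 (apply_mem_of_mem_span_image (fun p hp => ?_) hv)
    refine apply_mem_of_mem_span_image (A := P) (fun q hq => ?_) (hW p)
    rw [hP_out q (ne_and_notMem_oddSites_of_step hq hp).1]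
    exact zero_mem _

end Lattice

/-- For the walk `W = S_↓ C S_↑` on `ℓ²(ℤ) ⊗ ℂ^{2d}`, with `S_↑, S_↓`
the partial shifts and `C` any cell-wise unitary coin, the Schur function of each cell
`H_x` is even: `f(-z) = f(z)` on the unit disk; equivalently, all odd-order
coefficients `P_x (W* P_x^⊥)ⁿ W* P_x` of its power expansion vanish. -/
theorem statement19
    (e : ℤ × Bool × Fin d → H) (he : Orthonormal ℂ e)
    (hspan : (Submodule.span ℂ (Set.range e)).topologicalClosure = ⊤)
    (Sup Sdn C : H →L[ℂ] H)
    (hSup_up : ∀ x r, Sup (e (x, true, r)) = e (x + 1, true, r))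
    (hSup_dn : ∀ x r, Sup (e (x, false, r)) = e (x, false, r))
    (hSdn_up : ∀ x r, Sdn (e (x, true, r)) = e (x, true, r))
    (hSdn_dn : ∀ x r, Sdn (e (x, false, r)) = e (x - 1, false, r))
    (hCunit : C ∈ unitary (H →L[ℂ] H))
    (hCcell : ∀ x : ℤ, ∀ v ∈ cell e x, C v ∈ cell e x)
    (x : ℤ) (P : H →L[ℂ] H)
    (hP : ∀ v : H, P v ∈ cell e x ∧ v - P v ∈ (cell e x)ᗮ) :
    (∀ z : ℂ, ‖z‖ < 1 → schurP (Sdn ∘L C ∘L Sup) P (-z) = schurP (Sdn ∘L C ∘L Sup) P z) ∧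
    (∀ n : ℕ, Odd n →
      P ∘L ((star (Sdn ∘L C ∘L Sup) ∘L (1 - P)) ^ n) ∘L star (Sdn ∘L C ∘L Sup) ∘L P = 0) := by
  have : (cell e x).HasOrthogonalProjection := ⟨fun v => ⟨P v, hP v⟩⟩
  obtain rfl := eq_starProjection_of_forall_mem hP
  have hSup : Sup ∈ unitary (H →L[ℂ] H) :=
    he.mem_unitary_of_apply_eq hspan (shiftEquiv fun c => cond c 1 0)
      (by rintro ⟨y, _ | _, r⟩ <;> simp [shiftEquiv, hSup_up, hSup_dn])
  have hSdn : Sdn ∈ unitary (H →L[ℂ] H) :=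
    he.mem_unitary_of_apply_eq hspan (shiftEquiv fun c => cond c 0 (-1))
      (by rintro ⟨y, _ | _, r⟩ <;> simp [shiftEquiv, hSdn_up, hSdn_dn, sub_eq_add_neg])
  have hW : Sdn ∘L C ∘L Sup ∈ unitary (H →L[ℂ] H) := mul_mem hSdn (mul_mem hCunit hSup)
  have hodd : ∀ n : ℕ, Odd n → (cell e x).starProjection ∘L
      ((star (Sdn ∘L C ∘L Sup) ∘L (1 - (cell e x).starProjection)) ^ n) ∘L
        star (Sdn ∘L C ∘L Sup) ∘L (cell e x).starProjection = 0 := fun n hn =>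
    (isStarProjection_starProjection.isSelfAdjoint.star_compression_pow n).symm.trans <| by
      rw [← star_zero]
      exact congrArg star <| cell_compression_pow_odd_eq_zero e he
        (walk_apply_mem_tcell e hSup_up hSup_dn hSdn_up hSdn_dn hCcell) x hn
  exact ⟨fun z hz => schurP_neg hW (isStarProjection_starProjection.one_sub.norm_le _) hodd hz,
    hodd⟩
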